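/- Let Γ be a quasi-Fuchsian group with limit circle Λ, let c > 0, and let K₁, K₂ ⊆ O₊(Λ) be compact subsets. Then the set {γ ∈ Γ : there exist x ∈ K₁ and y ∈ K₂ with q(γ·x, y) ≥ −c} is finite; equivalently, q(γ·x, y) < −c for all x ∈ K₁, y ∈ K₂ and all γ ∈ Γ outside a finite subset. -/

import Mathlib

/-!
Fix a point `p` of the convex core `C(Λ)`. A point `w ∈ AdS₃` with `q(w, ν) ≤ 0` on `Λ` lies
within distance `1` of some `ρ • ν` with `ν ∈ Λ`, `ρ ≥ 0`. Pairing with a point `y` of a compact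
subset of `O₊(Λ)`, on which `q(y, ·) ≤ -ε` along `Λ`, bounds `ρ`, hence `‖w‖`, in terms of a lower
bound for `q(w, y)`. Applied first to `γ⁻¹ y` (paired with `x`) and then to `γ p` (paired with
`y`), this puts `γ p` into `C(Λ) ∩ closedBall 0 R` for one `R` serving every `γ` of the set. That
set is compact, since the convex hull of `Λ` is compact and avoids `0`, so proper discontinuity
leaves only finitely many `γ`.
-/

noncomputable section

/-- The bilinear form `q(x,y) = -x₁y₁ - x₂y₂ + x₃y₃ + x₄y₄` on `ℝ⁴`. -/
def qf (x y : Fin 4 → ℝ) : ℝ := -(x 0 * y 0) - x 1 * y 1 + x 2 * y 2 + x 3 * y 3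

/-- The identification `ℂ × ℂ ≅ ℝ⁴`, `(w, z) ↦ (Re w, Im w, Re z, Im z)`. -/
def toR4 (p : ℂ × ℂ) : Fin 4 → ℝ := ![p.1.re, p.1.im, p.2.re, p.2.im]

/-- An acausal circle: the graph `{(F(z), z) : z ∈ S¹}` of a distance-decreasing map
`F : S¹ → S¹`, viewed inside `ℝ⁴`. -/
def IsAcausalCircle (Λ : Set (Fin 4 → ℝ)) : Prop :=
  ∃ F : ℂ → ℂ,
    (∀ z : ℂ, ‖z‖ = 1 → ‖F z‖ = 1) ∧
    (∀ z z' : ℂ, ‖z‖ = 1 → ‖z'‖ = 1 → z ≠ z' →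
      ‖F z - F z'‖ < ‖z - z'‖) ∧
    Λ = {x | ∃ z : ℂ, ‖z‖ = 1 ∧ x = toR4 (F z, z)}

/-- The invisible domain `O₊(Λ) = {x ∈ AdS₃ : q(x,ν) < 0 for all ν ∈ Λ}`. -/
def invisible (Λ : Set (Fin 4 → ℝ)) : Set (Fin 4 → ℝ) :=
  {x | qf x x = -1 ∧ ∀ ν ∈ Λ, qf x ν < 0}

/-- The group of linear automorphisms of `ℝ⁴`. -/
abbrev GL4 := (Fin 4 → ℝ) ≃ₗ[ℝ] (Fin 4 → ℝ)

/-- A linear automorphism preserves the bilinear form `q`. -/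
def PreservesQ (γ : GL4) : Prop := ∀ u w : Fin 4 → ℝ, qf (γ u) (γ w) = qf u w

/-- The positive cone over a set `Λ ⊆ ℝ⁴`. -/
def qcone (Λ : Set (Fin 4 → ℝ)) : Set (Fin 4 → ℝ) :=
  {x | ∃ lam : ℝ, 0 < lam ∧ ∃ ν ∈ Λ, x = lam • ν}

/-- The convex hull `C(Λ) ⊆ AdS₃` of an acausal circle `Λ`:
`{x/√(-q(x)) : x ∈ convexHull(Λ), q(x) < 0}`. -/
def convexCore (Λ : Set (Fin 4 → ℝ)) : Set (Fin 4 → ℝ) :=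
  {y | ∃ x ∈ convexHull ℝ Λ, qf x x < 0 ∧ y = (Real.sqrt (-(qf x x)))⁻¹ • x}

/-- A subgroup `Γ` of the linear automorphisms of `ℝ⁴` preserving `q` is quasi-Fuchsian
with limit circle `Λ` if `Λ` is an acausal circle whose positive cone is `Γ`-invariant and
the action of `Γ` on the convex hull `C(Λ)` is free, properly discontinuous and
cocompact. -/
def IsQuasiFuchsian (Γ : Subgroup GL4) (Λ : Set (Fin 4 → ℝ)) : Prop :=
  IsAcausalCircle Λ ∧
  (∀ γ ∈ Γ, PreservesQ γ) ∧
  (∀ γ ∈ Γ, (⇑γ) '' qcone Λ = qcone Λ) ∧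
  (∀ γ ∈ Γ, ∀ x ∈ convexCore Λ, γ x = x → γ = 1) ∧
  (∀ K L : Set (Fin 4 → ℝ), K ⊆ convexCore Λ → L ⊆ convexCore Λ →
    IsCompact K → IsCompact L →
    {γ : GL4 | γ ∈ Γ ∧ (((⇑γ) '' K) ∩ L).Nonempty}.Finite) ∧
  (∃ L₀ : Set (Fin 4 → ℝ), L₀ ⊆ convexCore Λ ∧ IsCompact L₀ ∧
    (⋃ γ ∈ Γ, (⇑γ) '' L₀) = convexCore Λ)

open Set Metric ComplexConjugate

theorem IsCompact.convexHull_of_finiteDimensional {E : Type*} [NormedAddCommGroup E]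
    [NormedSpace ℝ E] [FiniteDimensional ℝ E] {s : Set E} (hs : IsCompact s) :
    IsCompact (convexHull ℝ s) := by
  let combo (n : ℕ) (p : (Fin n → ℝ) × (Fin n → E)) : E := ∑ i, p.1 i • p.2 i
  let pieces (n : ℕ) := combo n '' (stdSimplex ℝ (Fin n) ×ˢ univ.pi fun _ => s)
  -- Carathéodory: at most `finrank + 1` points are needed.
  have hull_eq : convexHull ℝ s = ⋃ n ∈ Finset.range (Module.finrank ℝ E + 2), pieces n := by
    refine Subset.antisymm (fun x hx => ?_) ?_
    · obtain ⟨ι, _, z, w, hzs, hz, hw0, hw1, rfl⟩ := eq_pos_convex_span_of_mem_convexHull hx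
      have hcard : Fintype.card ι < Module.finrank ℝ E + 2 :=
        Nat.lt_succ_of_le (hz.card_le_finrank_succ.trans
          (Nat.succ_le_succ (Submodule.finrank_le _)))
      let e := Fintype.equivFin ι
      refine mem_biUnion (Finset.mem_range.2 hcard)
        ⟨(w ∘ e.symm, z ∘ e.symm), ⟨⟨fun i => (hw0 _).le, ?_⟩, fun i _ => hzs ⟨_, rfl⟩⟩, ?_⟩
      · simpa [Function.comp_def] using (e.symm.sum_comp w).trans hw1
      · exact e.symm.sum_comp fun i => w i • z i
    · refine iUnion₂_subset fun n _ => ?_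
      rintro _ ⟨⟨w, z⟩, ⟨⟨hw0, hw1⟩, hz⟩, rfl⟩
      exact (convex_convexHull ℝ s).sum_mem (fun i _ => hw0 i) hw1
        fun i _ => subset_convexHull ℝ s (hz i trivial)
  rw [hull_eq]
  exact (Finset.range _).isCompact_biUnion fun n _ =>
    ((isCompact_stdSimplex ℝ _).prod (isCompact_univ_pi fun _ => hs)).image (by fun_prop)

theorem qf_comm (x y : Fin 4 → ℝ) : qf x y = qf y x := by unfold qf; ring

theorem qf_add_left (x x' y : Fin 4 → ℝ) : qf (x + x') y = qf x y + qf x' y := by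
  simp only [qf, Pi.add_apply]; ring

theorem qf_smul_left (t : ℝ) (x y : Fin 4 → ℝ) : qf (t • x) y = t * qf x y := by
  simp only [qf, Pi.smul_apply, smul_eq_mul]; ring

theorem qf_smul_right (t : ℝ) (x y : Fin 4 → ℝ) : qf x (t • y) = t * qf x y := by
  rw [qf_comm, qf_smul_left, qf_comm]

theorem continuous_qf : Continuous fun p : (Fin 4 → ℝ) × (Fin 4 → ℝ) => qf p.1 p.2 := by
  unfold qf; fun_prop

theorem continuous_qf_self : Continuous fun x : Fin 4 → ℝ => qf x x :=
  continuous_qf.comp (continuous_id.prodMk continuous_id)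

theorem abs_qf_le (x y : Fin 4 → ℝ) : |qf x y| ≤ 4 * ‖x‖ * ‖y‖ := by
  have h : ∀ i, |x i * y i| ≤ ‖x‖ * ‖y‖ := fun i => by
    rw [abs_mul]
    exact mul_le_mul (norm_le_pi_norm x i) (norm_le_pi_norm y i) (abs_nonneg _) (norm_nonneg _)
  have h0 := abs_le.1 (h 0); have h1 := abs_le.1 (h 1)
  have h2 := abs_le.1 (h 2); have h3 := abs_le.1 (h 3)
  unfold qf
  rw [abs_le]; constructor <;> linarith

theorem isLinearMap_qf_left (y : Fin 4 → ℝ) : IsLinearMap ℝ fun x => qf x y :=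
  ⟨fun x x' => qf_add_left x x' y, fun t x => qf_smul_left t x y⟩

theorem qf_nonpos_of_mem_convexHull {Λ : Set (Fin 4 → ℝ)} {x y : Fin 4 → ℝ}
    (hy : ∀ ν ∈ Λ, qf ν y ≤ 0) (hx : x ∈ convexHull ℝ Λ) : qf x y ≤ 0 :=
  convexHull_min hy (convex_halfSpace_le (isLinearMap_qf_left y) 0) hx

theorem qf_neg_of_mem_convexHull {Λ : Set (Fin 4 → ℝ)} {x y : Fin 4 → ℝ}
    (hy : ∀ ν ∈ Λ, qf ν y < 0) (hx : x ∈ convexHull ℝ Λ) : qf x y < 0 :=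
  convexHull_min hy (convex_halfSpace_lt (isLinearMap_qf_left y) 0) hx

theorem toR4_surjective : Function.Surjective toR4 := fun x =>
  ⟨(⟨x 0, x 1⟩, ⟨x 2, x 3⟩), by funext i; fin_cases i <;> rfl⟩

theorem toR4_sub_smul (p p' : ℂ × ℂ) (r : ℝ) : toR4 (p - r • p') = toR4 p - r • toR4 p' := by
  funext i; fin_cases i <;> simp [toR4]

theorem continuous_toR4 : Continuous toR4 :=
  continuous_pi fun i => by fin_cases i <;> simp only [toR4] <;> fun_prop

theorem norm_toR4_le (p : ℂ × ℂ) : ‖toR4 p‖ ≤ ‖p‖ := by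
  refine (pi_norm_le_iff_of_nonneg (norm_nonneg p)).2 fun i => ?_
  fin_cases i <;> simp only [toR4, Real.norm_eq_abs]
  · exact (Complex.abs_re_le_norm _).trans (norm_fst_le p)
  · exact (Complex.abs_im_le_norm _).trans (norm_fst_le p)
  · exact (Complex.abs_re_le_norm _).trans (norm_snd_le p)
  · exact (Complex.abs_im_le_norm _).trans (norm_snd_le p)

theorem qf_toR4_toR4 (a b u v : ℂ) :
    qf (toR4 (a, b)) (toR4 (u, v)) = (b * conj v).re - (a * conj u).re := by
  simp only [qf, toR4, Matrix.cons_val_zero, Matrix.cons_val_one, Matrix.cons_val, Complex.mul_re,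
    Complex.conj_re, Complex.conj_im]
  ring

theorem qf_toR4_toR4_of_norm_eq_one {a b u v : ℂ} (ha : ‖a‖ = 1) (hb : ‖b‖ = 1)
    (hu : ‖u‖ = 1) (hv : ‖v‖ = 1) :
    qf (toR4 (a, b)) (toR4 (u, v)) = (‖a - u‖ ^ 2 - ‖b - v‖ ^ 2) / 2 := by
  have h1 {z : ℂ} (hz : ‖z‖ = 1) : Complex.normSq z = 1 := by rw [← Complex.sq_norm, hz, one_pow]
  rw [qf_toR4_toR4, Complex.sq_norm, Complex.sq_norm, Complex.normSq_sub, Complex.normSq_sub,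
    h1 ha, h1 hb, h1 hu, h1 hv]
  ring

namespace IsAcausalCircle

variable {Λ : Set (Fin 4 → ℝ)}

theorem qf_self_eq_zero (hΛ : IsAcausalCircle Λ) {ν : Fin 4 → ℝ} (hν : ν ∈ Λ) : qf ν ν = 0 := by
  obtain ⟨F, hF1, -, rfl⟩ := hΛ
  obtain ⟨z, hz, rfl⟩ := hν
  simp [qf_toR4_toR4_of_norm_eq_one (hF1 z hz) hz (hF1 z hz) hz]

theorem qf_neg_of_ne (hΛ : IsAcausalCircle Λ) {ν ν' : Fin 4 → ℝ} (hν : ν ∈ Λ) (hν' : ν' ∈ Λ)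
    (hne : ν ≠ ν') : qf ν ν' < 0 := by
  obtain ⟨F, hF1, hFd, rfl⟩ := hΛ
  obtain ⟨z, hz, rfl⟩ := hν
  obtain ⟨z', hz', rfl⟩ := hν'
  have hzz' : z ≠ z' := by rintro rfl; exact hne rfl
  rw [qf_toR4_toR4_of_norm_eq_one (hF1 z hz) hz (hF1 z' hz') hz']
  have := pow_lt_pow_left₀ (hFd z z' hz hz' hzz') (norm_nonneg _) two_ne_zero
  linarith

theorem qf_nonpos (hΛ : IsAcausalCircle Λ) {ν ν' : Fin 4 → ℝ} (hν : ν ∈ Λ) (hν' : ν' ∈ Λ) :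
    qf ν ν' ≤ 0 := by
  rcases eq_or_ne ν ν' with rfl | hne
  · exact (hΛ.qf_self_eq_zero hν).le
  · exact (hΛ.qf_neg_of_ne hν hν' hne).le

theorem exists_ne (hΛ : IsAcausalCircle Λ) : ∃ ν ∈ Λ, ∃ ν' ∈ Λ, ν ≠ ν' := by
  obtain ⟨F, hF1, -, rfl⟩ := hΛ
  refine ⟨_, ⟨1, by simp, rfl⟩, _, ⟨-1, by simp, rfl⟩, fun h => ?_⟩
  have : (1 : ℝ) = -1 := by simpa [toR4] using congrFun h 2
  norm_num at this

theorem norm_le_one (hΛ : IsAcausalCircle Λ) {ν : Fin 4 → ℝ} (hν : ν ∈ Λ) : ‖ν‖ ≤ 1 := by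
  obtain ⟨F, hF1, -, rfl⟩ := hΛ
  obtain ⟨z, hz, rfl⟩ := hν
  exact (norm_toR4_le _).trans (by simp [Prod.norm_def, hF1 z hz, hz])

theorem isCompact (hΛ : IsAcausalCircle Λ) : IsCompact Λ := by
  obtain ⟨F, -, hFd, rfl⟩ := hΛ
  have hF : LipschitzOnWith 1 F (sphere 0 1) := by
    refine LipschitzOnWith.of_dist_le_mul fun z hz z' hz' => ?_
    rcases eq_or_ne z z' with rfl | hne
    · simp
    · simpa [dist_eq_norm] using (hFd z z' (by simpa using hz) (by simpa using hz') hne).le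
  have : {x | ∃ z : ℂ, ‖z‖ = 1 ∧ x = toR4 (F z, z)} = (fun z => toR4 (F z, z)) '' sphere 0 1 := by
    ext x; simp [eq_comm]
  rw [this]
  refine (isCompact_sphere 0 1).image_of_continuousOn ?_
  exact continuous_toR4.comp_continuousOn (hF.continuousOn.prodMk continuousOn_id)

theorem exists_sub_smul_norm_le_one (hΛ : IsAcausalCircle Λ) {w : Fin 4 → ℝ}
    (hw : qf w w = -1) (hwΛ : ∀ ν ∈ Λ, qf w ν ≤ 0) :
    ∃ ρ : ℝ, 0 ≤ ρ ∧ ∃ ν ∈ Λ, ‖w - ρ • ν‖ ≤ 1 := by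
  obtain ⟨F, hF1, -, rfl⟩ := hΛ
  obtain ⟨⟨a, b⟩, rfl⟩ := toR4_surjective w
  -- Write `b = ‖b‖ z` with `‖z‖ = 1` and take `ν = (F z, z)`: then `w - ‖b‖ ν = (a - ‖b‖ F z, 0)`,
  -- and `‖a - ‖b‖ F z‖² ≤ 1` follows from `‖a‖² = ‖b‖² + 1` and `‖b‖ ≤ Re (a conj (F z))`.
  set z := Complex.exp (b.arg * Complex.I)
  have hz : ‖z‖ = 1 := Complex.norm_exp_ofReal_mul_I _
  have hb : b = ‖b‖ * z := (Complex.norm_mul_exp_arg_mul_I b).symm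
  have hzz : z * conj z = 1 := by rw [Complex.mul_conj, Complex.normSq_eq_norm_sq, hz]; simp
  have hnormSq (u : ℂ) : (u * conj u).re = ‖u‖ ^ 2 := by
    rw [Complex.mul_conj, Complex.ofReal_re, Complex.normSq_eq_norm_sq]
  have ha : ‖a‖ ^ 2 = ‖b‖ ^ 2 + 1 := by
    rw [qf_toR4_toR4, hnormSq, hnormSq] at hw; linarith
  have haF : ‖b‖ ≤ (a * conj (F z)).re := by
    have := hwΛ _ ⟨z, hz, rfl⟩
    rw [qf_toR4_toR4, hb, mul_assoc, hzz] at this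
    simpa using this
  refine ⟨‖b‖, norm_nonneg b, _, ⟨z, hz, rfl⟩, ?_⟩
  rw [← toR4_sub_smul]
  refine (norm_toR4_le _).trans ?_
  have hsq : ‖a - ‖b‖ * F z‖ ^ 2 ≤ 1 := by
    rw [Complex.sq_norm, Complex.normSq_sub, ← Complex.sq_norm, ← Complex.sq_norm, norm_mul,
      hF1 z hz, map_mul, Complex.conj_ofReal, mul_left_comm, Complex.re_ofReal_mul]
    simp only [Complex.norm_real, Real.norm_eq_abs, abs_norm]
    nlinarith [norm_nonneg b]
  have : (a, b) - ‖b‖ • (F z, z) = (a - ‖b‖ * F z, 0) := by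
    ext : 1 <;> simp [Complex.real_smul, ← hb]
  rw [this, Prod.norm_def, norm_zero, max_eq_left (norm_nonneg _)]
  exact (pow_le_one_iff_of_nonneg (norm_nonneg _) two_ne_zero).1 hsq

theorem norm_le_of_neg_le_qf (hΛ : IsAcausalCircle Λ) {w y : Fin 4 → ℝ} {ε M c : ℝ}
    (hw : qf w w = -1) (hwΛ : ∀ ν ∈ Λ, qf w ν ≤ 0) (hε : 0 < ε) (hyΛ : ∀ ν ∈ Λ, qf y ν ≤ -ε)
    (hyM : ‖y‖ ≤ M) (hwy : -c ≤ qf w y) : ‖w‖ ≤ (4 * M + c) / ε + 1 := by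
  obtain ⟨ρ, hρ, ν, hν, hwν⟩ := hΛ.exists_sub_smul_norm_le_one hw hwΛ
  have hsplit : qf w y = ρ * qf ν y + qf (w - ρ • ν) y := by
    rw [← qf_smul_left, ← qf_add_left, add_sub_cancel]
  have hνy : qf ν y ≤ -ε := qf_comm ν y ▸ hyΛ ν hν
  have hrest : qf (w - ρ • ν) y ≤ 4 * M := by
    refine (le_abs_self _).trans ((abs_qf_le _ _).trans ?_)
    have := mul_le_mul hwν hyM (norm_nonneg y) zero_le_one
    linarith
  have hρε : ρ ≤ (4 * M + c) / ε := by
    rw [le_div_iff₀ hε]; nlinarith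
  calc ‖w‖ = ‖ρ • ν + (w - ρ • ν)‖ := by rw [add_sub_cancel]
    _ ≤ ρ * ‖ν‖ + 1 := by
      grw [norm_add_le, norm_smul, Real.norm_of_nonneg hρ, hwν]
    _ ≤ (4 * M + c) / ε + 1 := by
      grw [hΛ.norm_le_one hν, mul_one, hρε]

theorem exists_mem_convexHull_forall_qf_neg (hΛ : IsAcausalCircle Λ) :
    ∃ m ∈ convexHull ℝ Λ, ∀ ν ∈ Λ, qf m ν < 0 := by
  obtain ⟨ν₁, hν₁, ν₂, hν₂, hne⟩ := hΛ.exists_ne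
  refine ⟨(1 / 2 : ℝ) • ν₁ + (1 / 2 : ℝ) • ν₂,
    convex_convexHull ℝ Λ (subset_convexHull ℝ Λ hν₁) (subset_convexHull ℝ Λ hν₂)
      (by norm_num) (by norm_num) (by norm_num), fun ν hν => ?_⟩
  -- `ν` cannot equal both `ν₁` and `ν₂`
  rw [qf_add_left, qf_smul_left, qf_smul_left]
  have h₁ := hΛ.qf_nonpos hν₁ hν
  have h₂ := hΛ.qf_nonpos hν₂ hν
  rcases eq_or_ne ν₁ ν with rfl | h
  · linarith [hΛ.qf_neg_of_ne hν₂ hν₁ (Ne.symm hne)]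
  · linarith [hΛ.qf_neg_of_ne hν₁ hν h]

end IsAcausalCircle

section ConvexCore

variable {Λ : Set (Fin 4 → ℝ)}

theorem sqrt_neg_qf_smul_self {y : Fin 4 → ℝ} (hy : qf y y = -1) {t : ℝ} (ht : 0 ≤ t) :
    √(-qf (t • y) (t • y)) = t := by
  rw [qf_smul_left, qf_smul_right, hy, show -(t * (t * -1)) = t ^ 2 by ring, Real.sqrt_sq ht]

theorem mem_convexCore_iff {y : Fin 4 → ℝ} :
    y ∈ convexCore Λ ↔ qf y y = -1 ∧ ∃ t : ℝ, 0 < t ∧ t • y ∈ convexHull ℝ Λ := by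
  constructor
  · rintro ⟨x, hx, hxx, rfl⟩
    have hs : 0 < √(-qf x x) := Real.sqrt_pos.2 (neg_pos.2 hxx)
    refine ⟨?_, _, hs, by rwa [smul_inv_smul₀ hs.ne']⟩
    rw [qf_smul_left, qf_smul_right, ← mul_assoc, ← mul_inv, ← sq,
      Real.sq_sqrt (neg_nonneg.2 hxx.le)]
    field_simp [hxx.ne]
  · rintro ⟨hy, t, ht, hty⟩
    refine ⟨t • y, hty, ?_, by rw [sqrt_neg_qf_smul_self hy ht.le, inv_smul_smul₀ ht.ne']⟩
    rw [qf_smul_left, qf_smul_right, hy]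
    nlinarith

theorem qf_self_of_mem_convexCore {y : Fin 4 → ℝ} (hy : y ∈ convexCore Λ) : qf y y = -1 :=
  (mem_convexCore_iff.1 hy).1

theorem isCompact_convexCore_inter_closedBall (hΛ : IsCompact Λ)
    (h0 : (0 : Fin 4 → ℝ) ∉ convexHull ℝ Λ) (R : ℝ) :
    IsCompact (convexCore Λ ∩ closedBall 0 R) := by
  have hH := hΛ.convexHull_of_finiteDimensional
  obtain ⟨d, hd, hdH⟩ : ∃ d, 0 < d ∧ ∀ x ∈ convexHull ℝ Λ, d ≤ ‖x‖ :=
    hH.exists_forall_le' continuous_norm.continuousOn fun x hx =>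
      norm_pos_iff.2 (ne_of_mem_of_not_mem hx h0)
  -- on `convexCore Λ ∩ closedBall 0 R` the scaling factor into the hull is at least `d / R'`
  set R' := max R 1
  have hR' : 0 < R' := lt_max_of_lt_right one_pos
  set K := convexHull ℝ Λ ∩ {x | qf x x ≤ -(d / R') ^ 2}
  have hK : IsCompact K :=
    hH.inter_right (isClosed_le continuous_qf_self continuous_const)
  set f : (Fin 4 → ℝ) → (Fin 4 → ℝ) := fun x => (√(-qf x x))⁻¹ • x
  have hf : ContinuousOn f K := by
    refine ContinuousOn.smul (ContinuousOn.inv₀ (continuous_qf_self.neg.sqrt.continuousOn) fun x hx => ?_)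
      continuousOn_id
    exact (Real.sqrt_pos.2 (neg_pos.2 (hx.2.trans_lt (neg_lt_zero.2 (by positivity))))).ne'
  have hcore : convexCore Λ ∩ closedBall 0 R = f '' K ∩ closedBall 0 R := by
    refine Subset.antisymm (fun y ⟨hy, hyR⟩ => ⟨?_, hyR⟩) (inter_subset_inter_left _ ?_)
    · obtain ⟨hyy, t, ht, hty⟩ := mem_convexCore_iff.1 hy
      have hdt : d / R' ≤ t := by
        rw [div_le_iff₀ hR']
        calc d ≤ ‖t • y‖ := hdH _ hty
          _ = t * ‖y‖ := by rw [norm_smul, Real.norm_of_nonneg ht.le]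
          _ ≤ t * R' := by grw [mem_closedBall_zero_iff.1 hyR, le_max_left R 1]
      refine ⟨t • y, ⟨hty, ?_⟩, ?_⟩
      · change qf (t • y) (t • y) ≤ _
        rw [qf_smul_left, qf_smul_right, hyy]
        nlinarith [div_pos hd hR']
      · simp only [f, sqrt_neg_qf_smul_self hyy ht.le, inv_smul_smul₀ ht.ne']
    · rintro _ ⟨x, ⟨hx, hxK⟩, rfl⟩
      exact ⟨x, hx, hxK.trans_lt (neg_lt_zero.2 (by positivity)), rfl⟩
  rw [hcore]
  exact (hK.image_of_continuousOn hf).inter_right isClosed_closedBall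

end ConvexCore

namespace IsAcausalCircle

variable {Λ : Set (Fin 4 → ℝ)}

theorem qf_nonpos_of_mem_convexCore (hΛ : IsAcausalCircle Λ) {y ν : Fin 4 → ℝ}
    (hy : y ∈ convexCore Λ) (hν : ν ∈ Λ) : qf y ν ≤ 0 := by
  obtain ⟨-, t, ht, hty⟩ := mem_convexCore_iff.1 hy
  have := qf_nonpos_of_mem_convexHull (fun ν' hν' => hΛ.qf_nonpos hν' hν) hty
  rw [qf_smul_left] at this
  exact nonpos_of_mul_nonpos_right this ht

theorem convexCore_nonempty (hΛ : IsAcausalCircle Λ) : (convexCore Λ).Nonempty := by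
  obtain ⟨m, hm, hmΛ⟩ := hΛ.exists_mem_convexHull_forall_qf_neg
  have hmm : qf m m < 0 := qf_neg_of_mem_convexHull (fun ν hν => qf_comm m ν ▸ hmΛ ν hν) hm
  exact ⟨_, m, hm, hmm, rfl⟩

theorem zero_notMem_convexHull (hΛ : IsAcausalCircle Λ) : (0 : Fin 4 → ℝ) ∉ convexHull ℝ Λ := by
  obtain ⟨m, -, hmΛ⟩ := hΛ.exists_mem_convexHull_forall_qf_neg
  intro h0
  have := qf_neg_of_mem_convexHull (fun ν hν => qf_comm m ν ▸ hmΛ ν hν) h0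
  simp [qf] at this

theorem exists_pos_forall_qf_le_neg (hΛ : IsAcausalCircle Λ) {K : Set (Fin 4 → ℝ)}
    (hK : IsCompact K) (hKΛ : K ⊆ invisible Λ) :
    ∃ ε > 0, ∀ x ∈ K, ∀ ν ∈ Λ, qf x ν ≤ -ε := by
  obtain ⟨ε, hε, hεK⟩ := (hK.prod hΛ.isCompact).exists_forall_le' continuous_qf.neg.continuousOn
    fun p hp => neg_pos.2 ((hKΛ hp.1).2 p.2 hp.2)
  exact ⟨ε, hε, fun x hx ν hν => le_neg.1 (hεK (x, ν) ⟨hx, hν⟩)⟩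

end IsAcausalCircle

namespace PreservesQ

variable {Λ : Set (Fin 4 → ℝ)} {γ : GL4}

theorem qf_symm_apply (hγ : PreservesQ γ) (u w : Fin 4 → ℝ) :
    qf (γ.symm u) (γ.symm w) = qf u w := by
  rw [← hγ, γ.apply_symm_apply, γ.apply_symm_apply]

theorem qf_apply_left (hγ : PreservesQ γ) (u w : Fin 4 → ℝ) : qf (γ u) w = qf u (γ.symm w) := by
  rw [← hγ u, γ.apply_symm_apply]

theorem apply_mem_qcone (hγΛ : γ '' qcone Λ ⊆ qcone Λ) {ν : Fin 4 → ℝ} (hν : ν ∈ Λ) :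
    γ ν ∈ qcone Λ :=
  hγΛ ⟨ν, ⟨1, one_pos, ν, hν, (one_smul ℝ ν).symm⟩, rfl⟩

theorem qf_symm_apply_nonpos (hγ : PreservesQ γ) (hγΛ : γ '' qcone Λ ⊆ qcone Λ)
    {y ν : Fin 4 → ℝ} (hy : ∀ ν ∈ Λ, qf y ν ≤ 0) (hν : ν ∈ Λ) : qf (γ.symm y) ν ≤ 0 := by
  obtain ⟨r, hr, ν', hν', hγν⟩ := apply_mem_qcone hγΛ hν
  rw [← hγ, γ.apply_symm_apply, hγν, qf_smul_right]
  exact mul_nonpos_of_nonneg_of_nonpos hr.le (hy ν' hν')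

theorem apply_mem_convexCore (hγ : PreservesQ γ) (hγΛ : γ '' qcone Λ ⊆ qcone Λ)
    {y : Fin 4 → ℝ} (hy : y ∈ convexCore Λ) : γ y ∈ convexCore Λ := by
  obtain ⟨hyy, t, ht, hty⟩ := mem_convexCore_iff.1 hy
  have himage : γ '' convexHull ℝ Λ ⊆ ConvexCone.hull ℝ (convexHull ℝ Λ) := by
    have := γ.toLinearMap.image_convexHull Λ
    simp only [LinearEquiv.coe_coe] at this
    rw [this]
    refine convexHull_min ?_ (ConvexCone.convex _)
    rintro _ ⟨ν, hν, rfl⟩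
    obtain ⟨r, hr, ν', hν', hγν⟩ := apply_mem_qcone hγΛ hν
    change γ ν ∈ _
    rw [hγν]
    exact (ConvexCone.hull ℝ _).smul_mem hr
      (ConvexCone.subset_hull (subset_convexHull ℝ Λ hν'))
  obtain ⟨s, hs, x, hx, hsx⟩ :=
    (ConvexCone.mem_hull_of_convex (convex_convexHull ℝ Λ)).1 (himage ⟨_, hty, rfl⟩)
  refine mem_convexCore_iff.2 ⟨(hγ y y).trans hyy, s⁻¹ * t, by positivity, ?_⟩
  rwa [mul_smul, ← map_smul, ← hsx, inv_smul_smul₀ hs.ne']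

end PreservesQ

theorem stmt4_general (Γ : Subgroup GL4) (Λ : Set (Fin 4 → ℝ))
    (hΓ : IsQuasiFuchsian Γ Λ) (c : ℝ)
    (K₁ K₂ : Set (Fin 4 → ℝ)) (hK₁ : K₁ ⊆ invisible Λ) (hK₂ : K₂ ⊆ invisible Λ)
    (hK₁c : IsCompact K₁) (hK₂c : IsCompact K₂) :
    {γ : GL4 | γ ∈ Γ ∧ ∃ x ∈ K₁, ∃ y ∈ K₂, -c ≤ qf (γ x) y}.Finite := by
  obtain ⟨hΛ, hQ, hcone, -, hpd, -⟩ := hΓ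
  obtain ⟨ε₁, hε₁, hK₁ε⟩ := hΛ.exists_pos_forall_qf_le_neg hK₁c hK₁
  obtain ⟨ε₂, hε₂, hK₂ε⟩ := hΛ.exists_pos_forall_qf_le_neg hK₂c hK₂
  obtain ⟨M₁, hM₁⟩ := hK₁c.isBounded.exists_norm_le
  obtain ⟨M₂, hM₂⟩ := hK₂c.isBounded.exists_norm_le
  obtain ⟨p, hp⟩ := hΛ.convexCore_nonempty
  set B₁ := (4 * M₁ + c) / ε₁ + 1
  set B₂ := (4 * M₂ + 4 * ‖p‖ * B₁) / ε₂ + 1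
  -- every `γ` in the set moves `p` into the compact set `convexCore Λ ∩ closedBall 0 B₂`
  refine (hpd {p} (convexCore Λ ∩ closedBall 0 B₂) (singleton_subset_iff.2 hp)
    inter_subset_left isCompact_singleton (isCompact_convexCore_inter_closedBall
      hΛ.isCompact hΛ.zero_notMem_convexHull B₂)).subset ?_
  rintro γ ⟨hγ, x, hx, y, hy, hxy⟩
  have hγq := hQ γ hγ
  have hγΛ := (hcone γ hγ).subset
  have hy₁ : ‖γ.symm y‖ ≤ B₁ :=
    hΛ.norm_le_of_neg_le_qf ((hγq.qf_symm_apply y y).trans (hK₂ hy).1)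
      (fun ν => hγq.qf_symm_apply_nonpos hγΛ (fun ν hν => ((hK₂ hy).2 ν hν).le)) hε₁
      (hK₁ε x hx) (hM₁ x hx) (by rwa [qf_comm, ← hγq.qf_apply_left])
  have hpy : -(4 * ‖p‖ * B₁) ≤ qf (γ p) y := by
    rw [hγq.qf_apply_left, neg_le]
    refine (neg_le_abs _).trans ((abs_qf_le _ _).trans ?_)
    gcongr
  have hγp : γ p ∈ convexCore Λ := hγq.apply_mem_convexCore hγΛ hp
  have hγpB : ‖γ p‖ ≤ B₂ :=
    hΛ.norm_le_of_neg_le_qf (qf_self_of_mem_convexCore hγp)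
      (fun ν => hΛ.qf_nonpos_of_mem_convexCore hγp) hε₂ (hK₂ε y hy) (hM₂ y hy) hpy
  exact ⟨hγ, γ p, mem_image_of_mem γ rfl, hγp, mem_closedBall_zero_iff.2 hγpB⟩

/-- For a quasi-Fuchsian group `Γ`, `c > 0` and compact subsets `K₁, K₂` of the invisible
domain, the set of `γ ∈ Γ` with `q(γ·x, y) ≥ -c` for some `x ∈ K₁`, `y ∈ K₂` is finite. -/
theorem stmt4 (Γ : Subgroup GL4) (Λ : Set (Fin 4 → ℝ))
    (hΓ : IsQuasiFuchsian Γ Λ) (c : ℝ) (hc : 0 < c)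
    (K₁ K₂ : Set (Fin 4 → ℝ)) (hK₁ : K₁ ⊆ invisible Λ) (hK₂ : K₂ ⊆ invisible Λ)
    (hK₁c : IsCompact K₁) (hK₂c : IsCompact K₂) :
    {γ : GL4 | γ ∈ Γ ∧ ∃ x ∈ K₁, ∃ y ∈ K₂, -c ≤ qf (γ x) y}.Finite :=
  stmt4_general Γ Λ hΓ c K₁ K₂ hK₁ hK₂ hK₁c hK₂c

end
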